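/- arXiv:2012.04942 — 3 statements merged into one kernel-verified Lean document; each statement's English description precedes it below -/
import Mathlib

section
/- Let T₁ and T₂ be disjoint nonempty index sets and let {A_t : t ∈ T₁ ∪ T₂} be a family of nonempty subsets of X. Then for every m > 0: [ co‾( ⋃_{t∈T₁∪T₂} A_t ) ]_∞ = [ co‾( (⋃_{t∈T₁} A_t) ∪ (⋃_{t∈T₂} m·A_t) ) ]_∞ = [ co‾( ⋃_{t₁∈T₁, t₂∈T₂} (A_{t₁} + m·A_{t₂}) ) ]_∞, where m·A := {m a : a ∈ A} and + is the Minkowski sum. -/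
open Set Pointwise Topology
open scoped Classical

noncomputable section

variable {X : Type*} [AddCommGroup X] [Module ℝ X] [TopologicalSpace X]
  [IsTopologicalAddGroup X] [ContinuousSMul ℝ X] [LocallyConvexSpace ℝ X] [T2Space X]

/-- Convexity for extended-real-valued functions. -/
def EConvexOn' (f : X → EReal) : Prop :=
  ∀ x y : X, ∀ a b : ℝ, 0 ≤ a → 0 ≤ b → a + b = 1 →
    f (a • x + b • y) ≤ (a : EReal) * f x + (b : EReal) * f y

/-- `f ∈ Γ₀(X)`: proper, convex and lower semicontinuous. -/
def Gamma0 (f : X → EReal) : Prop :=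
  (∀ x, f x ≠ ⊥) ∧ (∃ x, f x ≠ ⊤) ∧ EConvexOn' f ∧ LowerSemicontinuous f

/-- Effective domain of `f`. -/
def edom (f : X → EReal) : Set X := {x | f x ≠ ⊤}

/-- The ε-subdifferential of `f` at `x` (a subset of the weak* dual);
it is empty when `ε < 0` or `f x ∉ ℝ`. -/
def esubdiff (f : X → EReal) (x : X) (ε : ℝ) : Set (WeakDual ℝ X) :=
  {p | 0 ≤ ε ∧ f x ≠ ⊤ ∧ f x ≠ ⊥ ∧
    ∀ y : X, f x + ((p y - p x - ε : ℝ) : EReal) ≤ f y}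

/-- Normal cone to `A` at `x` (empty when `x ∉ A`). -/
def normalCone (A : Set X) (x : X) : Set (WeakDual ℝ X) :=
  {p | x ∈ A ∧ ∀ y ∈ A, p y - p x ≤ 0}

/-- Recession cone of a set. -/
def recCone {V : Type*} [AddCommMonoid V] [Module ℝ V] (C : Set V) : Set V :=
  {y | ∃ c ∈ C, ∀ l : ℝ, 0 ≤ l → c + l • y ∈ C}

/-- Closed convex hull of a set. -/
def cclo {V : Type*} [AddCommMonoid V] [Module ℝ V] [TopologicalSpace V] (S : Set V) : Set V :=
  closure (convexHull ℝ S)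

/-- `sMul l f` is the function `l·f`, with the convention `0·f = I_{dom f}`
(i.e. `(l·f) z = +∞` whenever `f z = +∞`). -/
def sMul (l : ℝ) (f : X → EReal) : X → EReal :=
  fun z => if f z = ⊤ then ⊤ else (l : EReal) * f z

/-! All three sets have the same barrier cone (the continuous functionals bounded above on
them), because a functional is bounded above on `B₁ ∪ B₂`, on `B₁ ∪ m • B₂` and on
`B₁ + m • B₂` exactly when it is bounded above on both `B₁` and `B₂`. By Hahn–Banach, the
recession cone of the closed convex hull of a nonempty set is the polar of its barrier cone. -/

lemma bddAbove_add_iff_of_nonempty {α : Type*} [AddCommGroup α] [PartialOrder α]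
    [IsOrderedAddMonoid α] {s t : Set α} (hs : s.Nonempty) (ht : t.Nonempty) :
    BddAbove (s + t) ↔ BddAbove s ∧ BddAbove t := by
  refine ⟨fun ⟨M, hM⟩ => ⟨?_, ?_⟩, fun ⟨hs, ht⟩ => hs.add ht⟩
  · obtain ⟨b, hb⟩ := ht
    exact ⟨M - b, fun a ha => le_sub_iff_add_le.2 (hM (add_mem_add ha hb))⟩
  · obtain ⟨a, ha⟩ := hs
    exact ⟨M - a, fun b hb => le_sub_iff_add_le'.2 (hM (add_mem_add ha hb))⟩

section BarrierCone

variable {E : Type*} [AddCommGroup E] [Module ℝ E] [TopologicalSpace E]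

def barrierCone (K : Set E) : Set (StrongDual ℝ E) := {p | BddAbove (p '' K)}

lemma barrierCone_union (s t : Set E) :
    barrierCone (s ∪ t) = barrierCone s ∩ barrierCone t := by
  ext p
  simp only [barrierCone, mem_ofPred_eq, mem_inter_iff, image_union, bddAbove_union]

lemma barrierCone_smul {m : ℝ} (hm : 0 < m) (s : Set E) :
    barrierCone (m • s) = barrierCone s := by
  ext p
  simp only [barrierCone, mem_ofPred_eq, image_smul_set, bddAbove_smul_iff_of_pos hm]

lemma barrierCone_add {s t : Set E} (hs : s.Nonempty) (ht : t.Nonempty) :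
    barrierCone (s + t) = barrierCone s ∩ barrierCone t := by
  ext p
  simp only [barrierCone, mem_ofPred_eq, mem_inter_iff, image_add,
    bddAbove_add_iff_of_nonempty (hs.image p) (ht.image p)]

lemma cclo_subset_setOf_le {K : Set E} {p : StrongDual ℝ E} {M : ℝ}
    (h : K ⊆ {x | p x ≤ M}) : cclo K ⊆ {x | p x ≤ M} :=
  closure_minimal (convexHull_min h (convex_halfSpace_le p.toLinearMap.isLinear M))
    (isClosed_le p.continuous continuous_const)

lemma apply_nonpos_of_mem_recCone_cclo {K : Set E} {y : E} (hy : y ∈ recCone (cclo K))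
    {p : StrongDual ℝ E} (hp : p ∈ barrierCone K) : p y ≤ 0 := by
  obtain ⟨c, -, hc⟩ := hy
  obtain ⟨M, hM⟩ := hp
  have hbound : ∀ l : ℝ, 0 ≤ l → p c + l * p y ≤ M := fun l hl => by
    simpa using cclo_subset_setOf_le (fun x hx => hM (mem_image_of_mem p hx)) (hc l hl)
  by_contra! hpy
  have hfar := hbound ((M - p c + 1) / p y) (div_nonneg (by linarith [hbound 0 le_rfl]) hpy.le)
  rw [div_mul_cancel₀ _ hpy.ne'] at hfar
  linarith

lemma mem_recCone_cclo_iff [IsTopologicalAddGroup E] [ContinuousSMul ℝ E]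
    [LocallyConvexSpace ℝ E] {K : Set E} (hK : K.Nonempty) {y : E} :
    y ∈ recCone (cclo K) ↔ ∀ p ∈ barrierCone K, p y ≤ 0 := by
  refine ⟨fun hy p hp => apply_nonpos_of_mem_recCone_cclo hy hp, fun hy => ?_⟩
  obtain ⟨c, hc⟩ := hK
  refine ⟨c, subset_closure (subset_convexHull ℝ K hc), fun l hl => ?_⟩
  by_contra hout
  obtain ⟨p, u, hpu, hu⟩ :=
    geometric_hahn_banach_closed_point (convex_convexHull ℝ K).closure isClosed_closure hout
  have hpK : p ∈ barrierCone K :=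
    ⟨u, forall_mem_image.2 fun x hx => (hpu x (subset_closure (subset_convexHull ℝ K hx))).le⟩
  have hc_lt : p c < u := hpu c (subset_closure (subset_convexHull ℝ K hc))
  rw [map_add, map_smul, smul_eq_mul] at hu
  nlinarith [mul_nonpos_of_nonneg_of_nonpos hl (hy p hpK)]

lemma recCone_cclo_congr [IsTopologicalAddGroup E] [ContinuousSMul ℝ E]
    [LocallyConvexSpace ℝ E] {K₁ K₂ : Set E} (h₁ : K₁.Nonempty) (h₂ : K₂.Nonempty)
    (h : barrierCone K₁ = barrierCone K₂) : recCone (cclo K₁) = recCone (cclo K₂) := by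
  ext y
  rw [mem_recCone_cclo_iff h₁, mem_recCone_cclo_iff h₂, h]

end BarrierCone

theorem statement2_general {I : Type*} (T1 T2 : Set I)
    (hT1 : T1.Nonempty) (hT2 : T2.Nonempty)
    (A : I → Set X) (hA : ∀ t ∈ T1 ∪ T2, (A t).Nonempty)
    (m : ℝ) (hm : 0 < m) :
    (recCone (cclo (⋃ t ∈ T1 ∪ T2, A t)) =
      recCone (cclo ((⋃ t ∈ T1, A t) ∪ ⋃ t ∈ T2, m • A t))) ∧
    (recCone (cclo (⋃ t ∈ T1 ∪ T2, A t)) =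
      recCone (cclo (⋃ t1 ∈ T1, ⋃ t2 ∈ T2, (A t1 + m • A t2)))) := by
  obtain ⟨t1, ht1⟩ := hT1
  obtain ⟨t2, ht2⟩ := hT2
  have hB1 : (⋃ t ∈ T1, A t).Nonempty :=
    (hA t1 (Or.inl ht1)).mono (subset_biUnion_of_mem ht1)
  have hB2 : (m • ⋃ t ∈ T2, A t).Nonempty :=
    ((hA t2 (Or.inr ht2)).mono (subset_biUnion_of_mem ht2)).smul_set
  simp only [biUnion_union, ← smul_set_iUnion₂, ← add_iUnion₂, ← iUnion₂_add]
  refine ⟨recCone_cclo_congr (hB1.mono subset_union_left) (hB1.mono subset_union_left) ?_,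
    recCone_cclo_congr (hB1.mono subset_union_left) (hB1.add hB2) ?_⟩
  · rw [barrierCone_union, barrierCone_union, barrierCone_smul hm]
  · rw [barrierCone_union, barrierCone_add hB1 hB2, barrierCone_smul hm]

/-- Lemma `lemconsum0`: for a family of nonempty sets indexed by the disjoint
union of two nonempty index sets, and any `m > 0`, the three recession cones coincide. -/
theorem statement2 {I : Type*} (T1 T2 : Set I) (hdisj : Disjoint T1 T2)
    (hT1 : T1.Nonempty) (hT2 : T2.Nonempty)
    (A : I → Set X) (hA : ∀ t ∈ T1 ∪ T2, (A t).Nonempty)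
    (m : ℝ) (hm : 0 < m) :
    (recCone (cclo (⋃ t ∈ T1 ∪ T2, A t)) =
      recCone (cclo ((⋃ t ∈ T1, A t) ∪ ⋃ t ∈ T2, m • A t))) ∧
    (recCone (cclo (⋃ t ∈ T1 ∪ T2, A t)) =
      recCone (cclo (⋃ t1 ∈ T1, ⋃ t2 ∈ T2, (A t1 + m • A t2)))) :=
  statement2_general T1 T2 hT1 hT2 A hA m hm
end
end

section
/- Let {f_t : t ∈ T} ⊂ Γ₀(X) be a nonempty family, f := sup_{t∈T} f_t, x ∈ dom f, and ε > 0. Define ε_t := −ε / (2 f_t(x) − 2 f(x) + ε) for t ∈ T \ T_ε(x) and ε_t := 1 for t ∈ T_ε(x). Then 0 < ε_t < 1 for all t ∈ T \ T_ε(x), and, provided the standard hypothesis (SH) holds, N_{dom f}(x) = [ co‾( (⋃_{t∈T_ε(x)} ∂_ε f_t(x)) ∪ (⋃_{t∈T\T_ε(x)} ∂_ε(ε_t f_t)(x)) ) ]_∞, where (ε_t f_t)(z) := ε_t f_t(z). -/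
open Set Pointwise Topology
open scoped Classical

noncomputable section

variable {X : Type*} [AddCommGroup X] [Module ℝ X] [TopologicalSpace X]
  [IsTopologicalAddGroup X] [ContinuousSMul ℝ X] [LocallyConvexSpace ℝ X] [T2Space X]

/-!
A functional `y` lies in `N_{dom f}(x)` iff `⟨y, z⟩ ≤ 0` for every direction `z` such that some
point `x + λz`, `λ > 0`, lies in `dom f`; by Hahn–Banach in the weak* topology, `y` lies in the
recession cone of a nonempty closed convex set `C` as soon as `⟨y, z⟩ ≤ 0` for every `z` along
which `C` is bounded above. Both inclusions therefore reduce to comparing directions: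

* if `w ∈ dom f`, every ε-subgradient `p` of `f_t` (`t ∈ T_ε(x)`) or of `ε_t f_t` satisfies
  `⟨p, w - x⟩ ≤ |f(w) - f(x)| + 2ε`; for `t ∉ T_ε(x)` this uses `ε_t (f(x) - f_t(x)) ≤ ε`, which is
  what the choice of `ε_t` guarantees;
* if `C` is bounded above along `z`, then no `f_t` can be `+∞` on a whole initial piece of the ray
  `x + λz`, because separating a segment from the epigraph of `f_t` would produce ε-subgradients
  with arbitrarily large `⟨p, z⟩`. Convexity along the ray, (SH) and compactness of `T` then give
  one `λ > 0` with `sup_t f_t(x + λz) < +∞`, i.e. `x + λz ∈ dom f`.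
-/

def epigraph {E : Type*} (g : E → EReal) : Set (E × ℝ) := {q | g q.1 ≤ q.2}

lemma LowerSemicontinuous.isClosed_epigraph_real {E : Type*} [TopologicalSpace E]
    {g : E → EReal} (hg : LowerSemicontinuous g) : IsClosed (epigraph g) :=
  hg.isClosed_epigraph.preimage
    (continuous_fst.prodMk (continuous_coe_real_ereal.comp continuous_snd))

lemma toReal_sMul {E : Type*} (l : ℝ) (g : E → EReal) (w : E) :
    (sMul l g w).toReal = l * (g w).toReal := by
  unfold sMul
  split_ifs with h
  · simp [h]
  · rw [EReal.toReal_mul, EReal.toReal_coe]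

lemma sMul_ne_top {E : Type*} {l : ℝ} {g : E → EReal} {w : E} (htop : g w ≠ ⊤)
    (hbot : g w ≠ ⊥) :
    sMul l g w ≠ ⊤ := by
  rw [sMul, if_neg htop, ← EReal.coe_toReal htop hbot, ← EReal.coe_mul]
  exact EReal.coe_ne_top _

section

variable {E : Type*} [AddCommGroup E] [Module ℝ E]

lemma EConvexOn'.le_max {g : E → EReal} (hg : EConvexOn' g) {u v : E} {a b : ℝ}
    (ha : 0 ≤ a) (hb : 0 ≤ b) (hab : a + b = 1) :
    g (a • u + b • v) ≤ max (g u) (g v) :=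
  calc g (a • u + b • v) ≤ a * g u + b * g v := hg u v a b ha hb hab
    _ ≤ a * max (g u) (g v) + b * max (g u) (g v) :=
      add_le_add (mul_le_mul_of_nonneg_left (le_max_left _ _) (EReal.coe_nonneg.2 ha))
        (mul_le_mul_of_nonneg_left (le_max_right _ _) (EReal.coe_nonneg.2 hb))
    _ = max (g u) (g v) := by
      rw [← EReal.right_distrib_of_nonneg (EReal.coe_nonneg.2 ha) (EReal.coe_nonneg.2 hb),
        ← EReal.coe_add, hab, EReal.coe_one, one_mul]

lemma EConvexOn'.apply_add_smul_le_max {g : E → EReal} (hg : EConvexOn' g) (x z : E)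
    {μ l : ℝ} (hμ : 0 ≤ μ) (hμl : μ ≤ l) :
    g (x + μ • z) ≤ max (g (x + l • z)) (g x) := by
  have hl : 0 ≤ l := hμ.trans hμl
  have hcancel : μ / l * l = μ := div_mul_cancel_of_imp fun h => le_antisymm (h ▸ hμl) hμ
  have hpt : (μ / l) • (x + l • z) + (1 - μ / l) • x = x + μ • z := by
    rw [smul_add, smul_smul, hcancel, sub_smul, one_smul]
    abel
  rw [← hpt]
  exact hg.le_max (div_nonneg hμ hl) (sub_nonneg.2 (div_le_one_of_le₀ hμl hl)) (by ring)

lemma EConvexOn'.convex_epigraph {g : E → EReal} (hg : EConvexOn' g) :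
    Convex ℝ (epigraph g) := by
  rintro ⟨y₁, r₁⟩ (h₁ : g y₁ ≤ r₁) ⟨y₂, r₂⟩ (h₂ : g y₂ ≤ r₂) a b ha hb hab
  calc g (a • y₁ + b • y₂) ≤ a * g y₁ + b * g y₂ := hg y₁ y₂ a b ha hb hab
    _ ≤ a * r₁ + b * r₂ :=
      add_le_add (mul_le_mul_of_nonneg_left h₁ (EReal.coe_nonneg.2 ha))
        (mul_le_mul_of_nonneg_left h₂ (EReal.coe_nonneg.2 hb))
    _ = ((a • (y₁, r₁) + b • (y₂, r₂)).2 : ℝ) := by simp [EReal.coe_add, EReal.coe_mul]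

end

section

variable {E : Type*} [AddCommGroup E] [Module ℝ E] [TopologicalSpace E]

lemma apply_ne_bot_of_mem_esubdiff {g : E → EReal} {x : E} {ε : ℝ} {p : WeakDual ℝ E}
    (hp : p ∈ esubdiff g x ε) (w : E) : g w ≠ ⊥ := by
  obtain ⟨-, hxtop, hxbot, hineq⟩ := hp
  refine ne_bot_of_le_ne_bot ?_ (hineq w)
  rw [← EReal.coe_toReal hxtop hxbot, ← EReal.coe_add]
  exact EReal.coe_ne_bot _

lemma esubdiff_apply_sub_le {g : E → EReal} {x w : E} {ε : ℝ} {p : WeakDual ℝ E}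
    (hp : p ∈ esubdiff g x ε) (hw : g w ≠ ⊤) : p w - p x ≤ (g w).toReal - (g x).toReal + ε := by
  have h := hp.2.2.2 w
  rw [← EReal.coe_toReal hp.2.1 hp.2.2.1, ← EReal.coe_toReal hw (apply_ne_bot_of_mem_esubdiff hp w),
    ← EReal.coe_add, EReal.coe_le_coe_iff] at h
  linarith

lemma smul_mem_esubdiff_sMul {g : E → EReal} {x : E} {l δ : ℝ} {p : WeakDual ℝ E} (hl : 0 < l)
    (hp : p ∈ esubdiff g x δ) : l • p ∈ esubdiff (sMul l g) x (l * δ) := by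
  obtain ⟨hδ, hxtop, hxbot, hineq⟩ := hp
  have hsx : sMul l g x = ((l * (g x).toReal : ℝ) : EReal) := by
    rw [sMul, if_neg hxtop, EReal.coe_mul, EReal.coe_toReal hxtop hxbot]
  refine ⟨mul_nonneg hl.le hδ, hsx ▸ EReal.coe_ne_top _, hsx ▸ EReal.coe_ne_bot _, fun y => ?_⟩
  by_cases hy : g y = ⊤
  · simp [sMul, hy]
  have hreal := esubdiff_apply_sub_le ⟨hδ, hxtop, hxbot, hineq⟩ hy
  have hybot := apply_ne_bot_of_mem_esubdiff ⟨hδ, hxtop, hxbot, hineq⟩ y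
  rw [hsx, sMul, if_neg hy, ← EReal.coe_toReal hy hybot, ← EReal.coe_mul, ← EReal.coe_add,
    EReal.coe_le_coe_iff]
  change l * (g x).toReal + (l * p y - l * p x - l * δ) ≤ l * (g y).toReal
  nlinarith

lemma toWeakDual_mem_esubdiff {g : E → EReal} {x : E} {t₀ ε α c : ℝ} (L : StrongDual ℝ E)
    (hgx : g x = t₀) (hε : 0 ≤ ε) (hα : 0 < α) (hx : L x + α * (t₀ - ε) ≤ c)
    (hepi : ∀ y (r : ℝ), g y ≤ r → c < L y + α * r) :
    StrongDual.toWeakDual (-α⁻¹ • L) ∈ esubdiff g x ε := by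
  refine ⟨hε, by simp [hgx], by simp [hgx], fun y => ?_⟩
  have hquot : ∀ y', (-α⁻¹ • L) y' = -L y' / α := fun y' => by
    simp only [smul_apply, smul_eq_mul]; ring
  have key : ∀ r : ℝ, g y ≤ r → t₀ + ((-α⁻¹ • L) y - (-α⁻¹ • L) x - ε) ≤ r := by
    intro r hr
    have hdiv : (L x - L y) / α ≤ r - t₀ + ε := by
      rw [div_le_iff₀ hα]; linarith [hepi y r hr]
    rw [hquot, hquot]
    linarith [show -L y / α - -L x / α = (L x - L y) / α by ring]
  simp only [StrongDual.toWeakDual_apply, hgx]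
  generalize g y = a at key ⊢
  induction a using EReal.rec with
  | bot => linarith [key (t₀ + ((-α⁻¹ • L) y - (-α⁻¹ • L) x - ε) - 1) bot_le]
  | coe r => exact_mod_cast key r le_rfl
  | top => exact le_top

end

section

variable {E : Type*} [AddCommGroup E] [Module ℝ E] [TopologicalSpace E] [IsTopologicalAddGroup E]
  [ContinuousSMul ℝ E] [LocallyConvexSpace ℝ E]

lemma exists_mem_esubdiff_sub_lt_apply {g : E → EReal} (hconv : EConvexOn' g)
    (hlsc : LowerSemicontinuous g) {x : E} {t₀ ε : ℝ} (hgx : g x = t₀) (hε : 0 < ε) (z : E)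
    (M : ℝ) (hray : ∀ l ∈ Ioc (0 : ℝ) 1, ((t₀ - ε + l * M : ℝ) : EReal) < g (x + l • z)) :
    ∃ p ∈ esubdiff g x ε, M - ε < p z := by
  set P : E × ℝ := (x, t₀ - ε)
  have hseg : segment ℝ P (P + (z, M)) = (fun l : ℝ => (x + l • z, t₀ - ε + l * M)) '' Icc 0 1 := by
    rw [segment_eq_image', add_sub_cancel_left]; rfl
  have hdisj : Disjoint (segment ℝ P (P + (z, M))) (epigraph g) := by
    rw [hseg, disjoint_left]
    rintro _ ⟨l, ⟨hl0, hl1⟩, rfl⟩ (hle : g (x + l • z) ≤ ((t₀ - ε + l * M : ℝ) : EReal))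
    rcases hl0.eq_or_lt with rfl | hl0
    · rw [zero_smul, add_zero, hgx, EReal.coe_le_coe_iff] at hle
      linarith
    · exact (hray l ⟨hl0, hl1⟩).not_ge hle
  obtain ⟨ψ, u, v, hKu, huv, hv⟩ := geometric_hahn_banach_compact_closed (convex_segment _ _)
    (hseg ▸ isCompact_Icc.image (by fun_prop)) hconv.convex_epigraph hlsc.isClosed_epigraph_real
    hdisj
  -- Comparing `(x, t₀ - ε)` with `(x, t₀) ∈ epigraph g` forces `α > 0`; then `-L / α` is the
  -- ε-subgradient, and the endpoint `(x + z, t₀ - ε + M)` gives the bound on `p z`.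
  set L := ψ.comp (ContinuousLinearMap.inl ℝ E ℝ)
  set α := ψ (0, 1)
  have hψ : ∀ y r, ψ (y, r) = L y + α * r := by
    intro y r
    rw [show ((y, r) : E × ℝ) = (y, 0) + r • (0, 1) by simp, map_add, map_smul, smul_eq_mul,
      mul_comm]
    rfl
  have hepi : ∀ y (r : ℝ), g y ≤ r → v < L y + α * r := fun y r h => hψ y r ▸ hv (y, r) h
  have hleft : L x + α * (t₀ - ε) < u := hψ x _ ▸ hKu _ (left_mem_segment ℝ _ _)
  have hright : L (x + z) + α * (t₀ - ε + M) < u := hψ _ _ ▸ hKu _ (right_mem_segment ℝ _ _)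
  have hvx : v < L x + α * t₀ := hepi x t₀ hgx.le
  have hα : 0 < α := lt_of_mul_lt_mul_right (by linarith : 0 * ε < α * ε) hε.le
  refine ⟨_, toWeakDual_mem_esubdiff L hgx hε.le hα (hleft.le.trans huv.le) hepi, ?_⟩
  rw [map_add] at hright
  simp only [StrongDual.toWeakDual_apply, smul_apply, smul_eq_mul]
  rw [show -α⁻¹ * L z = -L z / α by ring, lt_div_iff₀ hα]
  linarith

lemma esubdiff_nonempty {g : E → EReal} {x : E} {t₀ ε : ℝ} (hconv : EConvexOn' g)
    (hlsc : LowerSemicontinuous g) (hgx : g x = t₀) (hε : 0 < ε) : (esubdiff g x ε).Nonempty := by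
  obtain ⟨p, hp, -⟩ := exists_mem_esubdiff_sub_lt_apply hconv hlsc hgx hε 0 0 fun l _ => by
    rw [smul_zero, add_zero, hgx, mul_zero, add_zero, EReal.coe_lt_coe_iff]
    linarith
  exact ⟨p, hp⟩

lemma exists_mem_esubdiff_lt_apply_of_eq_top {g : E → EReal} {x : E} {t₀ ε : ℝ}
    (hconv : EConvexOn' g) (hlsc : LowerSemicontinuous g) (hgx : g x = t₀) (hε : 0 < ε) {z : E}
    (htop : ∀ l ∈ Ioc (0 : ℝ) 1, g (x + l • z) = ⊤) (u : ℝ) :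
    ∃ p ∈ esubdiff g x ε, u < p z := by
  obtain ⟨p, hp, hpz⟩ := exists_mem_esubdiff_sub_lt_apply hconv hlsc hgx hε z (u + ε)
    fun l hl => htop l hl ▸ EReal.coe_lt_top _
  exact ⟨p, hp, by linarith⟩

end

lemma exists_pos_iSup_apply_add_smul_ne_top {E T : Type*} [AddCommGroup E] [Module ℝ E]
    [TopologicalSpace T] [CompactSpace T] {f : T → E → EReal} (hconv : ∀ t, EConvexOn' (f t))
    (husc : ∀ w, UpperSemicontinuous fun t => f t w) {x : E} {c : ℝ} (hc : ∀ t, f t x ≤ c)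
    (z : E) (hz : ∀ t, ∃ l : ℝ, 0 < l ∧ f t (x + l • z) ≠ ⊤) :
    ∃ l : ℝ, 0 < l ∧ (⨆ t, f t (x + l • z)) ≠ ⊤ := by
  let step : ℕ → ℝ := fun n => ((n : ℝ) + 1)⁻¹
  let U : ℕ → Set T := fun n => {t | f t (x + step n • z) < ((n : ℝ) : EReal)}
  have hU : ∀ n, IsOpen (U n) := fun n => upperSemicontinuous_iff_isOpen_preimage.1 (husc _) _
  have hcover : univ ⊆ ⋃ n, U n := by
    intro t _
    obtain ⟨l, hl, hne⟩ := hz t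
    obtain ⟨n, hn⟩ := exists_nat_gt (max l⁻¹ (max c (f t (x + l • z)).toReal))
    simp only [max_lt_iff] at hn
    refine mem_iUnion.2 ⟨n, ?_⟩
    have hstep : step n ≤ l := inv_le_of_inv_le₀ hl (by linarith)
    calc f t (x + step n • z) ≤ max (f t (x + l • z)) (f t x) :=
          (hconv t).apply_add_smul_le_max x z (by positivity) hstep
      _ ≤ max ((f t (x + l • z)).toReal : EReal) c := max_le_max (EReal.le_coe_toReal hne) (hc t)
      _ < ((n : ℝ) : EReal) := max_lt (by exact_mod_cast hn.2.2) (by exact_mod_cast hn.2.1)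
  obtain ⟨s, hs⟩ := isCompact_univ.elim_finite_subcover U hU hcover
  set N := s.sup id
  refine ⟨step N, by positivity, ne_top_of_le_ne_top (EReal.coe_ne_top (max (N : ℝ) c))
    (iSup_le fun t => ?_)⟩
  obtain ⟨n, hn, ht⟩ := mem_iUnion₂.1 (hs (mem_univ t))
  have hnN : (n : ℝ) ≤ N := by exact_mod_cast Finset.le_sup (f := id) hn
  calc f t (x + step N • z) ≤ max (f t (x + step n • z)) (f t x) :=
        (hconv t).apply_add_smul_le_max x z (by positivity)
          (inv_anti₀ (by positivity) (by linarith))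
    _ ≤ ((max (N : ℝ) c : ℝ) : EReal) :=
        max_le (ht.le.trans (by exact_mod_cast hnN.trans (le_max_left _ _)))
          ((hc t).trans (by exact_mod_cast le_max_right _ _))

section

variable {E : Type*} [AddCommGroup E] [Module ℝ E] [TopologicalSpace E]

lemma subset_cclo (S : Set (WeakDual ℝ E)) : S ⊆ cclo S :=
  (subset_convexHull ℝ S).trans subset_closure

lemma bddAbove_apply_image_cclo_iff {S : Set (WeakDual ℝ E)} {z : E} :
    BddAbove ((fun p : WeakDual ℝ E => p z) '' cclo S) ↔
      BddAbove ((fun p : WeakDual ℝ E => p z) '' S) := by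
  refine ⟨fun h => h.mono (image_mono (subset_cclo S)), fun ⟨u, hu⟩ => ⟨u, ?_⟩⟩
  have hhalf : Convex ℝ {p : WeakDual ℝ E | p z ≤ u} :=
    convex_halfSpace_le (f := fun p : WeakDual ℝ E => p z) ⟨fun _ _ => rfl, fun _ _ => rfl⟩ u
  have hS : cclo S ⊆ {p : WeakDual ℝ E | p z ≤ u} :=
    closure_minimal (convexHull_min (fun p hp => hu ⟨p, hp, rfl⟩) hhalf)
      (isClosed_le (WeakDual.eval_continuous z) continuous_const)
  exact forall_mem_image.2 hS

lemma exists_apply_lt_of_notMem {C : Set (WeakDual ℝ E)} (hconv : Convex ℝ C)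
    (hclosed : IsClosed C) {q : WeakDual ℝ E} (hq : q ∉ C) :
    ∃ (z : E) (u : ℝ), (∀ p ∈ C, p z < u) ∧ u < q z := by
  have : LocallyConvexSpace ℝ (WeakDual ℝ E) := WeakBilin.locallyConvexSpace
  obtain ⟨φ, u, hC, hq⟩ := geometric_hahn_banach_closed_point hconv hclosed hq
  obtain ⟨z, rfl⟩ := LinearMap.dualEmbedding_surjective (topDualPairing ℝ E) φ
  exact ⟨z, u, hC, hq⟩

lemma mem_recCone_of_forall_bddAbove {C : Set (WeakDual ℝ E)} (hconv : Convex ℝ C)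
    (hclosed : IsClosed C) (hne : C.Nonempty) {y : WeakDual ℝ E}
    (hy : ∀ z : E, BddAbove ((fun p : WeakDual ℝ E => p z) '' C) → y z ≤ 0) :
    y ∈ recCone C := by
  obtain ⟨c, hc⟩ := hne
  refine ⟨c, hc, fun l hl => by_contra fun hnot => ?_⟩
  obtain ⟨z, u, hCu, hu⟩ := exists_apply_lt_of_notMem hconv hclosed hnot
  have hyz : y z ≤ 0 := hy z ⟨u, forall_mem_image.2 fun p hp => (hCu p hp).le⟩
  have hcz := hCu c hc
  change u < c z + l * y z at hu
  nlinarith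

lemma normalCone_subset_recCone_cclo {A : Set E} {x : E} {S : Set (WeakDual ℝ E)}
    (hne : S.Nonempty)
    (hS : ∀ z : E, BddAbove ((fun p : WeakDual ℝ E => p z) '' S) → ∃ l : ℝ, 0 < l ∧ x + l • z ∈ A) :
    normalCone A x ⊆ recCone (cclo S) := by
  rintro y ⟨-, hy⟩
  refine mem_recCone_of_forall_bddAbove (convex_convexHull ℝ S).closure isClosed_closure
    (hne.mono (subset_cclo S)) fun z hz => ?_
  obtain ⟨l, hl, hmem⟩ := hS z (bddAbove_apply_image_cclo_iff.1 hz)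
  have h := hy _ hmem
  rw [map_add, map_smul, smul_eq_mul, add_sub_cancel_left] at h
  exact nonpos_of_mul_nonpos_right h hl

lemma recCone_subset_normalCone {A : Set E} {x : E} (hx : x ∈ A) {C : Set (WeakDual ℝ E)}
    (hC : ∀ w ∈ A, BddAbove ((fun p : WeakDual ℝ E => p (w - x)) '' C)) :
    recCone C ⊆ normalCone A x := by
  rintro y ⟨c, hc, hray⟩
  refine ⟨hx, fun w hw => ?_⟩
  obtain ⟨M, hM⟩ := hC w hw
  have hbound : ∀ l : ℝ, 0 ≤ l → c (w - x) + l * y (w - x) ≤ M :=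
    fun l hl => hM ⟨_, hray l hl, rfl⟩
  rw [← map_sub]
  by_contra! hpos
  have h := hbound ((|M - c (w - x)| + 1) / y (w - x)) (by positivity)
  rw [div_mul_cancel₀ _ hpos.ne'] at h
  linarith [le_abs_self (M - c (w - x))]

end

lemma neg_div_mem_Ioo_and_mul_sub_le {ε a b : ℝ} (hε : 0 < ε) (hab : a < b - ε) :
    -ε / (2 * a - 2 * b + ε) ∈ Ioo 0 1 ∧ -ε / (2 * a - 2 * b + ε) * (b - a) ≤ ε := by
  have hpos : 0 < 2 * (b - a) - ε := by linarith
  rw [show -ε / (2 * a - 2 * b + ε) = ε / (2 * (b - a) - ε) by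
    rw [← neg_div_neg_eq]; ring_nf]
  refine ⟨⟨div_pos hε hpos, (div_lt_one hpos).2 (by linarith)⟩, ?_⟩
  rw [div_mul_eq_mul_div, div_le_iff₀ hpos]
  nlinarith

section Family

variable {E T : Type*} {f : T → E → EReal} {x : E} {ε : ℝ}

def epsActive (f : T → E → EReal) (x : E) (ε : ℝ) : Set T :=
  {t | (⨆ s, f s x) - (ε : EReal) ≤ f t x}

def esubdiffUnion [AddCommGroup E] [Module ℝ E] [TopologicalSpace E] (f : T → E → EReal) (x : E)
    (ε : ℝ) (et : T → ℝ) : Set (WeakDual ℝ E) :=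
  (⋃ t ∈ epsActive f x ε, esubdiff (f t) x ε) ∪
    ⋃ t ∈ (epsActive f x ε)ᶜ, esubdiff (sMul (et t) (f t)) x ε

lemma mem_epsActive_iff (hx : (⨆ s, f s x) ≠ ⊤) {t : T} (hbot : f t x ≠ ⊥) :
    t ∈ epsActive f x ε ↔ (⨆ s, f s x).toReal - ε ≤ (f t x).toReal := by
  have hle := le_iSup (fun s => f s x) t
  have hF := EReal.coe_toReal hx (ne_bot_of_le_ne_bot hbot hle)
  have hf := EReal.coe_toReal (ne_top_of_le_ne_top hx hle) hbot
  conv_lhs => rw [epsActive, mem_ofPred_eq, ← hF, ← hf]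
  rw [← EReal.coe_sub, EReal.coe_le_coe_iff]

lemma epsActive_nonempty [Nonempty T] (hx : (⨆ s, f s x) ≠ ⊤) (hbot : ∀ t, f t x ≠ ⊥)
    (hε : 0 < ε) : (epsActive f x ε).Nonempty := by
  obtain ⟨t₀⟩ := ‹Nonempty T›
  have hF := EReal.coe_toReal hx (ne_bot_of_le_ne_bot (hbot t₀) (le_iSup (fun s => f s x) t₀))
  have hlt : (⨆ s, f s x) - (ε : EReal) < ⨆ s, f s x := by
    rw [← hF, ← EReal.coe_sub, EReal.coe_lt_coe_iff]
    linarith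
  obtain ⟨t, ht⟩ := lt_iSup_iff.1 hlt
  exact ⟨t, ht.le⟩

lemma weights_mem_Ioo_and_mul_le {et : T → ℝ} (hε : 0 < ε) (hx : (⨆ s, f s x) ≠ ⊤)
    (hbot : ∀ t, f t x ≠ ⊥)
    (het : ∀ t ∉ epsActive f x ε,
      et t = -ε / (2 * (f t x).toReal - 2 * (⨆ s, f s x).toReal + ε)) :
    ∀ t ∉ epsActive f x ε,
      et t ∈ Ioo 0 1 ∧ et t * ((⨆ s, f s x).toReal - (f t x).toReal) ≤ ε := fun t ht => by
  rw [mem_epsActive_iff hx (hbot t), not_le] at ht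
  exact het t (by rwa [mem_epsActive_iff hx (hbot t), not_le]) ▸
    neg_div_mem_Ioo_and_mul_sub_le hε (by linarith)

variable [AddCommGroup E] [Module ℝ E] [TopologicalSpace E] {et : T → ℝ}

lemma bddAbove_apply_sub_image_esubdiffUnion (hx : (⨆ t, f t x) ≠ ⊤)
    (hbot : ∀ t w, f t w ≠ ⊥)
    (het : ∀ t ∉ epsActive f x ε,
      et t ∈ Ioo 0 1 ∧ et t * ((⨆ s, f s x).toReal - (f t x).toReal) ≤ ε)
    {w : E} (hw : w ∈ edom fun w => ⨆ t, f t w) :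
    BddAbove ((fun p : WeakDual ℝ E => p (w - x)) '' esubdiffUnion f x ε et) := by
  set A := (⨆ t, f t x).toReal
  set B := (⨆ t, f t w).toReal
  refine ⟨|B - A| + 2 * ε, forall_mem_image.2 fun p hp => ?_⟩
  have hupper : ∀ t, (f t x).toReal ≤ A ∧ f t w ≠ ⊤ ∧ (f t w).toReal ≤ B := fun t =>
    ⟨EReal.toReal_le_toReal (le_iSup (fun s => f s x) t) (hbot t x) hx,
      ne_top_of_le_ne_top hw (le_iSup (fun s => f s w) t),
      EReal.toReal_le_toReal (le_iSup (fun s => f s w) t) (hbot t w) hw⟩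
  rw [map_sub]
  rcases hp with hp | hp <;> obtain ⟨t, ht, hp⟩ := mem_iUnion₂.1 hp <;>
    obtain ⟨hat, hwt, hbt⟩ := hupper t
  · have hact := (mem_epsActive_iff hx (hbot t x)).1 ht
    linarith [esubdiff_apply_sub_le hp hwt, hp.1, le_abs_self (B - A)]
  · have h := esubdiff_apply_sub_le hp (sMul_ne_top hwt (hbot t w))
    rw [toReal_sMul, toReal_sMul] at h
    obtain ⟨⟨h0, h1⟩, hmul⟩ := het t ht
    nlinarith [mul_le_mul_of_nonneg_left hbt h0.le, le_abs_self (B - A), hp.1,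
      mul_le_mul_of_nonneg_left (le_abs_self (B - A)) h0.le,
      mul_le_of_le_one_left (abs_nonneg (B - A)) h1.le]

variable [IsTopologicalAddGroup E] [ContinuousSMul ℝ E] [LocallyConvexSpace ℝ E]

lemma esubdiffUnion_nonempty [Nonempty T] (hconv : ∀ t, EConvexOn' (f t))
    (hlsc : ∀ t, LowerSemicontinuous (f t)) (hx : (⨆ t, f t x) ≠ ⊤) (hbot : ∀ t, f t x ≠ ⊥)
    (hε : 0 < ε) : (esubdiffUnion f x ε et).Nonempty := by
  obtain ⟨t, ht⟩ := epsActive_nonempty hx hbot hε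
  have hgx := EReal.coe_toReal (ne_top_of_le_ne_top hx (le_iSup (fun s => f s x) t)) (hbot t)
  obtain ⟨p, hp⟩ := esubdiff_nonempty (hconv t) (hlsc t) hgx.symm hε
  exact ⟨p, Or.inl (mem_biUnion ht hp)⟩

lemma exists_pos_add_smul_mem_edom [TopologicalSpace T] [CompactSpace T]
    (hconv : ∀ t, EConvexOn' (f t)) (hlsc : ∀ t, LowerSemicontinuous (f t))
    (husc : ∀ w, UpperSemicontinuous fun t => f t w) (hx : (⨆ t, f t x) ≠ ⊤)
    (hbot : ∀ t, f t x ≠ ⊥) (hε : 0 < ε) (het : ∀ t ∉ epsActive f x ε, 0 < et t) {z : E}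
    (hz : BddAbove ((fun p : WeakDual ℝ E => p z) '' esubdiffUnion f x ε et)) :
    ∃ l : ℝ, 0 < l ∧ x + l • z ∈ edom fun w => ⨆ t, f t w := by
  obtain ⟨u, hu⟩ := hz
  have hle : ∀ p ∈ esubdiffUnion f x ε et, p z ≤ u := fun p hp => hu ⟨p, hp, rfl⟩
  refine exists_pos_iSup_apply_add_smul_ne_top hconv husc
    (fun t => (le_iSup (fun s => f s x) t).trans (EReal.le_coe_toReal hx)) z fun t => ?_
  by_contra! htop
  have hgx := EReal.coe_toReal (ne_top_of_le_ne_top hx (le_iSup (fun s => f s x) t)) (hbot t)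
  by_cases ht : t ∈ epsActive f x ε
  · obtain ⟨p, hp, hpz⟩ := exists_mem_esubdiff_lt_apply_of_eq_top (hconv t) (hlsc t) hgx.symm hε
      (fun l hl => htop l hl.1) u
    exact hpz.not_ge (hle p (Or.inl (mem_biUnion ht hp)))
  · have hpos := het t ht
    obtain ⟨p, hp, hpz⟩ := exists_mem_esubdiff_lt_apply_of_eq_top (hconv t) (hlsc t) hgx.symm
      (div_pos hε hpos) (fun l hl => htop l hl.1) (u / et t)
    have hscaled := smul_mem_esubdiff_sMul hpos hp
    rw [mul_div_cancel₀ _ hpos.ne'] at hscaled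
    have hpz' : et t * p z ≤ u := hle _ (Or.inr (mem_biUnion ht hscaled))
    rw [div_lt_iff₀' hpos] at hpz
    linarith

end Family

theorem statement8_general {T : Type*} [TopologicalSpace T] [CompactSpace T] [Nonempty T]
    (f : T → X → EReal) (hf : ∀ t, Gamma0 (f t))
    (husc : ∀ z : X, UpperSemicontinuous fun t => f t z)
    (x : X) (hx : x ∈ edom (fun z => ⨆ t, f t z))
    (ε : ℝ) (hε : 0 < ε)
    (et : T → ℝ)
    (het2 : ∀ t, ¬((⨆ s, f s x) - (ε : EReal) ≤ f t x) →
      et t = -ε / (2 * (f t x).toReal - 2 * ((⨆ s, f s x)).toReal + ε)) :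
    (∀ t, ¬((⨆ s, f s x) - (ε : EReal) ≤ f t x) → 0 < et t ∧ et t < 1) ∧
    normalCone (edom (fun z => ⨆ t, f t z)) x =
      recCone (cclo
        ((⋃ t ∈ {t : T | (⨆ s, f s x) - (ε : EReal) ≤ f t x}, esubdiff (f t) x ε) ∪
         (⋃ t ∈ {t : T | (⨆ s, f s x) - (ε : EReal) ≤ f t x}ᶜ,
            esubdiff (sMul (et t) (f t)) x ε))) := by
  have hbot : ∀ t w, f t w ≠ ⊥ := fun t => (hf t).1
  have hconv : ∀ t, EConvexOn' (f t) := fun t => (hf t).2.2.1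
  have hlsc : ∀ t, LowerSemicontinuous (f t) := fun t => (hf t).2.2.2
  have hweights := weights_mem_Ioo_and_mul_le hε hx (fun t => hbot t x) het2
  refine ⟨fun t ht => (hweights t ht).1, Subset.antisymm ?_ ?_⟩
  · exact normalCone_subset_recCone_cclo
      (esubdiffUnion_nonempty hconv hlsc hx (fun t => hbot t x) hε) fun z hz =>
        exists_pos_add_smul_mem_edom hconv hlsc husc hx (fun t => hbot t x) hε
          (fun t ht => (hweights t ht).1.1) hz
  · exact recCone_subset_normalCone hx fun w hw => bddAbove_apply_image_cclo_iff.2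
      (bddAbove_apply_sub_image_esubdiffUnion hx hbot hweights hw)

/-- Corollary `cp1`: with `ε_t := −ε/(2f_t(x) − 2f(x) + ε)` off the
`ε`-active set `T_ε(x)` and `ε_t := 1` on it, one has `0 < ε_t < 1` off `T_ε(x)`, and under
(SH) the normal cone to `dom f` at `x` is the recession cone of the closed convex hull of
the corresponding union of ε-subdifferentials. -/
theorem statement8 {T : Type*} [TopologicalSpace T] [CompactSpace T] [T2Space T] [Nonempty T]
    (f : T → X → EReal) (hf : ∀ t, Gamma0 (f t))
    (husc : ∀ z : X, UpperSemicontinuous fun t => f t z)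
    (x : X) (hx : x ∈ edom (fun z => ⨆ t, f t z))
    (ε : ℝ) (hε : 0 < ε)
    (et : T → ℝ)
    (het1 : ∀ t, ((⨆ s, f s x) - (ε : EReal) ≤ f t x) → et t = 1)
    (het2 : ∀ t, ¬((⨆ s, f s x) - (ε : EReal) ≤ f t x) →
      et t = -ε / (2 * (f t x).toReal - 2 * ((⨆ s, f s x)).toReal + ε)) :
    (∀ t, ¬((⨆ s, f s x) - (ε : EReal) ≤ f t x) → 0 < et t ∧ et t < 1) ∧
    normalCone (edom (fun z => ⨆ t, f t z)) x =
      recCone (cclo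
        ((⋃ t ∈ {t : T | (⨆ s, f s x) - (ε : EReal) ≤ f t x}, esubdiff (f t) x ε) ∪
         (⋃ t ∈ {t : T | (⨆ s, f s x) - (ε : EReal) ≤ f t x}ᶜ,
            esubdiff (sMul (et t) (f t)) x ε))) :=
  statement8_general f hf husc x hx ε hε et het2
end
end

section
/- Let {f_t : t ∈ T} ⊂ Γ₀(X) be a nonempty family, f := sup_{t∈T} f_t, and x ∈ dom f. Assume the standard hypothesis (SH) holds. Let (ε_t)_{t∈T} ⊂ (0,1] satisfy inf_{t∈T} ε_t f_t(x) > −∞ and let δ_t > 0, t ∈ T, satisfy 0 < inf_{t∈T} δ_t ≤ sup_{t∈T} δ_t < +∞. Then N_{dom f}(x) = [ co‾( ⋃_{t∈T} ∂_{δ_t}(ε_t f_t)(x) ) ]_∞, where (ε_t f_t)(z) := ε_t f_t(z). -/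
/-!
For `y ∈ dom f`, every `δ_t`-subgradient `q` of `ε_t f_t` at `x` satisfies
`⟨q, y - x⟩ ≤ ε_t f_t(y) - ε_t f_t(x) + δ_t`, and the right-hand side is bounded uniformly in `t`
because `ε_t ≤ 1`, `inf_t ε_t f_t(x) > -∞` and `sup_t δ_t < ∞`. Hence the closed convex hull lies
in a half-space `{⟨·, y - x⟩ ≤ R}`, and each of its recession directions `p` has
`⟨p, y - x⟩ ≤ 0`.

Conversely, let `p ∈ N_{dom f}(x)` and suppose `c + λ p` leaves the closed convex hull. A weak*
separation gives some `z ∈ X` with `⟨p, z⟩ > 0` such that all the `δ_t`-subdifferentials are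
bounded above in the direction `z`. If `f_t = +∞` on `x + (0, 1] z`, separating the epigraph of
`ε_t f_t` from a segment starting at `(x, ε_t f_t(x) - δ_t)` produces `δ_t`-subgradients with
arbitrarily large values at `z`; hence `x + μ_t z ∈ dom f_t` for some `μ_t > 0`. By compactness
of `T` and upper semicontinuity of `t ↦ f_t`, one `μ > 0` works for every `t`, so
`x + μ z ∈ dom f`. This contradicts `⟨p, z⟩ > 0`.
-/

open Set Pointwise Topology
open scoped Classical

noncomputable section

variable {X : Type*} [AddCommGroup X] [Module ℝ X] [TopologicalSpace X]
  [IsTopologicalAddGroup X] [ContinuousSMul ℝ X] [LocallyConvexSpace ℝ X] [T2Space X]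

namespace EReal

lemma coe_mul_ne_top {e : ℝ} (he : 0 ≤ e) {a : EReal} (ha : a ≠ ⊤) : (e : EReal) * a ≠ ⊤ := by
  simp [EReal.mul_ne_top, ha, he]

lemma coe_mul_ne_bot {e : ℝ} (he : 0 ≤ e) {a : EReal} (ha : a ≠ ⊥) : (e : EReal) * a ≠ ⊥ := by
  simp [EReal.mul_ne_bot, ha, he]

lemma coe_mul_eq_top_iff {e : ℝ} (he : 0 < e) {a : EReal} : (e : EReal) * a = ⊤ ↔ a = ⊤ := by
  simp [EReal.mul_eq_top, he, he.not_gt]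

lemma monotone_coe_mul {e : ℝ} (he : 0 ≤ e) : Monotone fun a : EReal => (e : EReal) * a :=
  fun _ _ h => mul_le_mul_of_nonneg_left h (EReal.coe_nonneg.2 he)

lemma continuous_coe_mul (e : ℝ) : Continuous fun a : EReal => (e : EReal) * a :=
  continuous_iff_continuousAt.2 fun _ =>
    Tendsto.const_mul Filter.tendsto_id (.inl (coe_ne_bot e)) (.inl (coe_ne_top e))

lemma coe_mul_le_max {e : ℝ} (he₀ : 0 ≤ e) (he₁ : e ≤ 1) (a : EReal) :
    (e : EReal) * a ≤ max a 0 := by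
  induction a with
  | bot =>
    exact (mul_nonpos_of_nonneg_of_nonpos (EReal.coe_nonneg.2 he₀) bot_le).trans (le_max_right _ _)
  | coe a =>
    rcases le_total 0 a with ha | ha
    · exact (EReal.coe_le_coe_iff.2 (mul_le_of_le_one_left ha he₁)).trans (le_max_left _ _)
    · exact (EReal.coe_le_coe_iff.2 (mul_nonpos_of_nonneg_of_nonpos he₀ ha)).trans
        (le_max_right _ _)
  | top => simp

end EReal

lemma sMul_of_pos {E : Type*} {e : ℝ} (he : 0 < e) (f : E → EReal) :
    sMul e f = fun z => (e : EReal) * f z := by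
  funext z
  by_cases h : f z = ⊤
  · simp [sMul, h, EReal.coe_mul_top_of_pos he]
  · simp [sMul, h]

lemma edom_coe_mul {E : Type*} {e : ℝ} (he : 0 < e) (f : E → EReal) :
    edom (fun z => (e : EReal) * f z) = edom f := by
  ext z
  exact not_congr (EReal.coe_mul_eq_top_iff he)

lemma UpperSemicontinuous.isOpen_setOf_ne_top {T : Type*} [TopologicalSpace T] {g : T → EReal}
    (hg : UpperSemicontinuous g) : IsOpen {t | g t ≠ ⊤} := by
  simpa only [Set.preimage, mem_Iio, lt_top_iff_ne_top] using
    upperSemicontinuous_iff_isOpen_preimage.1 hg ⊤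

lemma UpperSemicontinuous.iSup_ne_top {T : Type*} [TopologicalSpace T] [CompactSpace T]
    {g : T → EReal} (hg : UpperSemicontinuous g) (h : ∀ t, g t ≠ ⊤) : ⨆ t, g t ≠ ⊤ := by
  rcases isEmpty_or_nonempty T with hT | hT
  · simp
  obtain ⟨t₀, -, hmax⟩ :=
    (hg.upperSemicontinuousOn univ).exists_isMaxOn univ_nonempty isCompact_univ
  exact ne_top_of_le_ne_top (h t₀) (iSup_le fun t => hmax (mem_univ t))

lemma isClosed_realEpigraph {E : Type*} [TopologicalSpace E] {φ : E → EReal}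
    (hφ : LowerSemicontinuous φ) : IsClosed {p : E × ℝ | φ p.1 ≤ p.2} :=
  (lowerSemicontinuous_iff_isClosed_epigraph.1 hφ).preimage
    (continuous_fst.prodMk (continuous_coe_real_ereal.comp continuous_snd))

lemma le_zero_of_mem_recCone_cclo {V : Type*} [AddCommGroup V] [Module ℝ V] [TopologicalSpace V]
    (φ : V →L[ℝ] ℝ) {S : Set V} {R : ℝ} (hS : ∀ v ∈ S, φ v ≤ R) {p : V}
    (hp : p ∈ recCone (cclo S)) : φ p ≤ 0 := by
  obtain ⟨c, -, hray⟩ := hp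
  have hH : cclo S ⊆ {v | φ v ≤ R} :=
    closure_minimal (convexHull_min hS (convex_halfSpace_le φ.toLinearMap.isLinear R))
      (isClosed_le φ.continuous continuous_const)
  by_contra! hpos
  obtain ⟨l, hl⟩ := exists_nat_gt ((R - φ c) / φ p)
  have hcl : φ c + l * φ p ≤ R := by simpa using hH (hray l l.cast_nonneg)
  rw [div_lt_iff₀ hpos] at hl
  linarith

lemma WeakBilin.exists_lt_of_notMem {E F : Type*} [AddCommGroup E] [Module ℝ E] [AddCommGroup F]
    [Module ℝ F] (B : E →ₗ[ℝ] F →ₗ[ℝ] ℝ) {C : Set (WeakBilin B)} (hconv : Convex ℝ C)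
    (hclosed : IsClosed C) {p : WeakBilin B} (hp : p ∉ C) :
    ∃ z : F, ∃ u : ℝ, (∀ q ∈ C, B q z < u) ∧ u < B p z := by
  obtain ⟨Φ, u, hC, hpu⟩ := geometric_hahn_banach_closed_point hconv hclosed hp
  obtain ⟨z, rfl⟩ := LinearMap.dualEmbedding_surjective B Φ
  exact ⟨z, u, hC, hpu⟩

section Convexity

variable {E : Type*} [AddCommGroup E] [Module ℝ E]

lemma EConvexOn'.convex_edom {f : E → EReal} (hf : EConvexOn' f) : Convex ℝ (edom f) :=
  fun x hx y hy a b ha hb hab => ne_top_of_le_ne_top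
    (EReal.add_ne_top (EReal.coe_mul_ne_top ha hx) (EReal.coe_mul_ne_top hb hy))
    (hf x y a b ha hb hab)

lemma EConvexOn'.add_smul_mem_edom_of_le {f : E → EReal} (hf : EConvexOn' f) {x z : E}
    (hx : x ∈ edom f) {μ μ' : ℝ} (hμ' : x + μ' • z ∈ edom f) (hμ : 0 ≤ μ) (hμμ' : μ ≤ μ') :
    x + μ • z ∈ edom f := by
  have hline : Convex ℝ ((fun θ : ℝ => x + θ • z) ⁻¹' edom f) := by
    have hmap : (fun θ : ℝ => x + θ • z) = AffineMap.lineMap x (x + z) := by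
      funext θ
      simp [AffineMap.lineMap_apply, add_comm]
    exact hmap ▸ hf.convex_edom.affine_preimage _
  exact hline.ordConnected.out (by simpa using hx) hμ' ⟨hμ, hμμ'⟩

lemma EConvexOn'.convex_realEpigraph {φ : E → EReal} (hφ : EConvexOn' φ) :
    Convex ℝ {p : E × ℝ | φ p.1 ≤ p.2} := by
  rintro ⟨y₁, s₁⟩ h₁ ⟨y₂, s₂⟩ h₂ a b ha hb hab
  change φ (a • y₁ + b • y₂) ≤ ((a * s₁ + b * s₂ : ℝ) : EReal)
  calc φ (a • y₁ + b • y₂) ≤ a * φ y₁ + b * φ y₂ := hφ y₁ y₂ a b ha hb hab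
    _ ≤ a * s₁ + b * s₂ :=
        add_le_add (EReal.monotone_coe_mul ha h₁) (EReal.monotone_coe_mul hb h₂)
    _ = ((a * s₁ + b * s₂ : ℝ) : EReal) := by norm_cast

lemma segment_disjoint_realEpigraph {φ : E → EReal} {x z : E} {c ε n s : ℝ} (hx : φ x = c)
    (hε : 0 < ε) (hn : 0 ≤ n) (htop : ∀ θ, 0 < θ → θ ≤ n → φ (x + θ • z) = ⊤) :
    Disjoint (segment ℝ (x, c - ε) (x + n • z, c - ε + n * s)) {p : E × ℝ | φ p.1 ≤ p.2} := by
  rw [Set.disjoint_left, segment_eq_image']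
  rintro _ ⟨θ, ⟨hθ0, hθ1⟩, rfl⟩ hmem
  change φ (x + θ • (x + n • z - x)) ≤ ((c - ε + θ • (c - ε + n * s - (c - ε)) : ℝ) : EReal)
    at hmem
  rw [add_sub_cancel_left, smul_smul] at hmem
  rcases (mul_nonneg hθ0 hn).eq_or_lt with h0 | hpos
  · rw [← h0, zero_smul, add_zero, hx, EReal.coe_le_coe_iff] at hmem
    simp only [add_sub_cancel_left, smul_eq_mul, ← mul_assoc, ← h0, zero_mul] at hmem
    linarith
  · rw [htop _ hpos (mul_le_of_le_one_left hn hθ1)] at hmem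
    exact EReal.coe_ne_top _ (top_le_iff.1 hmem)

lemma exists_pos_forall_add_smul_mem_edom {T : Type*} [TopologicalSpace T] [CompactSpace T]
    {f : T → E → EReal} (hconv : ∀ t, EConvexOn' (f t))
    (husc : ∀ w, UpperSemicontinuous fun t => f t w) {x z : E} (hx : ∀ t, x ∈ edom (f t))
    (hray : ∀ t, ∃ μ : ℝ, 0 < μ ∧ x + μ • z ∈ edom (f t)) :
    ∃ μ : ℝ, 0 < μ ∧ ∀ t, x + μ • z ∈ edom (f t) := by
  set U : ℕ → Set T := fun k => {t | x + ((k : ℝ) + 1)⁻¹ • z ∈ edom (f t)}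
  have hU : Monotone U := fun k l hkl t ht =>
    (hconv t).add_smul_mem_edom_of_le (hx t) ht (by positivity) (by gcongr)
  have hcover : univ ⊆ ⋃ k, U k := fun t _ => by
    obtain ⟨μ, hμ, hmem⟩ := hray t
    obtain ⟨k, hk⟩ := exists_nat_one_div_lt hμ
    exact mem_iUnion.2 ⟨k, (hconv t).add_smul_mem_edom_of_le (hx t) hmem (by positivity)
      (by simpa using hk.le)⟩
  obtain ⟨k, hk⟩ := isCompact_univ.elim_directed_cover U
    (fun k => (husc _).isOpen_setOf_ne_top) hcover hU.directed_le
  exact ⟨((k : ℝ) + 1)⁻¹, by positivity, fun t => hk (mem_univ t)⟩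

end Convexity

section Subdifferential

variable {E : Type*} [AddCommGroup E] [Module ℝ E] [TopologicalSpace E]

lemma Gamma0.const_mul {f : E → EReal} (hf : Gamma0 f) {e : ℝ} (he : 0 ≤ e) :
    Gamma0 fun z => (e : EReal) * f z := by
  obtain ⟨hbot, ⟨x₀, hx₀⟩, hconv, hlsc⟩ := hf
  refine ⟨fun z => EReal.coe_mul_ne_bot he (hbot z), ⟨x₀, EReal.coe_mul_ne_top he hx₀⟩, ?_,
    (EReal.continuous_coe_mul e).comp_lowerSemicontinuous hlsc (EReal.monotone_coe_mul he)⟩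
  intro x y a b ha hb hab
  calc (e : EReal) * f (a • x + b • y) ≤ e * (a * f x + b * f y) :=
        EReal.monotone_coe_mul he (hconv x y a b ha hb hab)
    _ = a * (e * f x) + b * (e * f y) := by
        rw [EReal.left_distrib_of_nonneg_of_ne_top (EReal.coe_nonneg.2 he) (EReal.coe_ne_top e),
          mul_left_comm, mul_left_comm (e : EReal)]

lemma mem_esubdiff_of_forall_le {φ : E → EReal} {x : E} {c ε : ℝ} (hx : φ x = c) (hε : 0 ≤ ε)
    (q : WeakDual ℝ E) (h : ∀ y (s : ℝ), φ y ≤ s → c + (q y - q x - ε) ≤ s) :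
    q ∈ esubdiff φ x ε := by
  refine ⟨hε, hx ▸ EReal.coe_ne_top c, hx ▸ EReal.coe_ne_bot c, fun y => ?_⟩
  have hy := h y
  rw [hx, ← EReal.coe_add]
  generalize φ y = a at hy ⊢
  induction a with
  | bot => linarith [hy (c + (q y - q x - ε) - 1) bot_le]
  | coe r => exact EReal.coe_le_coe_iff.2 (hy r le_rfl)
  | top => exact le_top

lemma esubdiff_apply_sub_le_s11 {φ : E → EReal} {x y : E} {δ K m : ℝ} {q : WeakDual ℝ E}
    (hq : q ∈ esubdiff φ x δ) (hy : φ y ≤ K) (hx : m ≤ φ x) : q (y - x) ≤ K - m + δ := by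
  obtain ⟨-, -, -, hsub⟩ := hq
  have hle := (add_le_add_left hx _).trans ((hsub y).trans hy)
  rw [← EReal.coe_add, EReal.coe_le_coe_iff] at hle
  rw [map_sub]
  linarith

theorem recCone_subset_normalCone_s11 {T : Type*} {f : T → E → EReal} {x : E}
    (hx : x ∈ edom fun z => ⨆ t, f t z) {e δ : T → ℝ} (he : ∀ t, 0 ≤ e t ∧ e t ≤ 1)
    (hinf : ⊥ < ⨅ t, (e t : EReal) * f t x) {b : ℝ} (hδ : ∀ t, δ t ≤ b) :
    recCone (cclo (⋃ t, esubdiff (fun z => (e t : EReal) * f t z) x (δ t))) ⊆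
      normalCone (edom fun z => ⨆ t, f t z) x := by
  refine fun p hp => ⟨hx, fun y hy => ?_⟩
  obtain ⟨m, -, hm⟩ := EReal.lt_iff_exists_real_btwn.1 hinf
  obtain ⟨K, hK, -⟩ := EReal.lt_iff_exists_real_btwn.1 (lt_top_iff_ne_top.2 hy)
  have hbound : ∀ q ∈ ⋃ t, esubdiff (fun z => (e t : EReal) * f t z) x (δ t),
      WeakBilin.eval (topDualPairing ℝ E) (y - x) q ≤ max K 0 - m + b := by
    simp only [mem_iUnion]
    rintro q ⟨t, hq⟩
    refine (esubdiff_apply_sub_le_s11 (K := max K 0) hq ?_ (hm.le.trans (iInf_le _ t))).trans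
      (by linarith [hδ t])
    calc (e t : EReal) * f t y ≤ max (f t y) 0 := EReal.coe_mul_le_max (he t).1 (he t).2 _
      _ ≤ max (K : EReal) 0 := max_le_max_right 0 ((le_iSup (fun t => f t y) t).trans hK.le)
      _ = ((max K 0 : ℝ) : EReal) := by norm_cast
  have hpyx : p (y - x) ≤ 0 := le_zero_of_mem_recCone_cclo _ hbound hp
  rwa [map_sub] at hpyx

variable [IsTopologicalAddGroup E] [ContinuousSMul ℝ E] [LocallyConvexSpace ℝ E]

theorem Gamma0.exists_mem_esubdiff_lt {φ : E → EReal} (hφ : Gamma0 φ) {x : E} (hx : x ∈ edom φ)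
    {ε : ℝ} (hε : 0 < ε) (z : E) (s : ℝ) {n : ℝ} (hn : 0 ≤ n)
    (htop : ∀ θ, 0 < θ → θ ≤ n → φ (x + θ • z) = ⊤) :
    ∃ q ∈ esubdiff φ x ε, n * s - ε < n * q z := by
  obtain ⟨hbot, -, hconv, hlsc⟩ := hφ
  set c := (φ x).toReal
  have hc : φ x = c := (EReal.coe_toReal hx (hbot x)).symm
  set K := segment ℝ (x, c - ε) (x + n • z, c - ε + n * s)
  have hK : IsCompact K := by
    simp only [K, segment_eq_image]
    exact isCompact_Icc.image (by fun_prop)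
  -- `q` will be the horizontal part of the separating functional divided by minus its vertical part
  obtain ⟨Φ, u, v, hΦK, huv, hΦE⟩ := geometric_hahn_banach_compact_closed (convex_segment _ _) hK
    hconv.convex_realEpigraph (isClosed_realEpigraph hlsc)
    (segment_disjoint_realEpigraph hc hε hn htop)
  set ℓ : E →L[ℝ] ℝ := Φ.comp (ContinuousLinearMap.inl ℝ E ℝ)
  set r := Φ (0, 1)
  have hΦ : ∀ y s, Φ (y, s) = ℓ y + s * r := fun y s => by
    rw [show ((y, s) : E × ℝ) = (y, 0) + s • (0, 1) by simp, map_add, map_smul, smul_eq_mul]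
    rfl
  have hsep : ∀ k ∈ K, ∀ y (s : ℝ), φ y ≤ s → Φ k < ℓ y + s * r := fun k hk y s hy =>
    hΦ y s ▸ (hΦK k hk).trans (huv.trans (hΦE (y, s) hy))
  have h₀ : ∀ y (s : ℝ), φ y ≤ s → ℓ x + (c - ε) * r < ℓ y + s * r :=
    hΦ x (c - ε) ▸ hsep _ (left_mem_segment ℝ _ _)
  have h₁ := hsep _ (right_mem_segment ℝ _ _) x c hc.le
  rw [hΦ, map_add, map_smul, smul_eq_mul] at h₁
  have hr : 0 < r := by nlinarith [h₀ x c hc.le]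
  refine ⟨((-r⁻¹) • ℓ : E →L[ℝ] ℝ), mem_esubdiff_of_forall_le hc hε.le _ fun y s hy => ?_, ?_⟩
  · have := h₀ y s hy
    change c + (-r⁻¹ * ℓ y - -r⁻¹ * ℓ x - ε) ≤ s
    rw [← mul_le_mul_iff_of_pos_right hr]
    field_simp
    linarith
  · change n * s - ε < n * (-r⁻¹ * ℓ z)
    rw [← mul_lt_mul_iff_of_pos_right hr]
    field_simp
    linarith

lemma Gamma0.exists_add_smul_mem_edom {φ : E → EReal} (hφ : Gamma0 φ) {x : E} (hx : x ∈ edom φ)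
    {ε : ℝ} (hε : 0 < ε) {z : E} {u : ℝ} (hu : ∀ q ∈ esubdiff φ x ε, q z ≤ u) :
    ∃ μ : ℝ, 0 < μ ∧ x + μ • z ∈ edom φ := by
  by_contra! hcon
  obtain ⟨q, hq, hlt⟩ := hφ.exists_mem_esubdiff_lt hx hε z (u + ε) zero_le_one
    fun θ hθ _ => not_not.1 (hcon θ hθ)
  linarith [hu q hq]

theorem normalCone_subset_recCone {T : Type*} [TopologicalSpace T] [CompactSpace T] [Nonempty T]
    {f : T → E → EReal} (hf : ∀ t, Gamma0 (f t)) (husc : ∀ z, UpperSemicontinuous fun t => f t z)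
    {x : E} (hx : x ∈ edom fun z => ⨆ t, f t z) {e δ : T → ℝ} (he : ∀ t, 0 < e t)
    (hδ : ∀ t, 0 < δ t) :
    normalCone (edom fun z => ⨆ t, f t z) x ⊆
      recCone (cclo (⋃ t, esubdiff (fun z => (e t : EReal) * f t z) x (δ t))) := by
  set S := ⋃ t, esubdiff (fun z => (e t : EReal) * f t z) x (δ t)
  have hS : S ⊆ cclo S := (subset_convexHull ℝ S).trans subset_closure
  have hg : ∀ t, Gamma0 fun z => (e t : EReal) * f t z := fun t => (hf t).const_mul (he t).le
  have hxt : ∀ t, x ∈ edom (f t) := fun t => ne_top_of_le_ne_top hx (le_iSup (fun t => f t x) t)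
  have hxg : ∀ t, x ∈ edom fun z => (e t : EReal) * f t z := fun t => by
    rw [edom_coe_mul (he t)]
    exact hxt t
  rintro p ⟨-, hp⟩
  obtain ⟨t₀⟩ := ‹Nonempty T›
  obtain ⟨c, hc, -⟩ := (hg t₀).exists_mem_esubdiff_lt (hxg t₀) (hδ t₀) 0 0 le_rfl
    fun θ h₀ h₁ => absurd (h₀.trans_le h₁) (lt_irrefl 0)
  have hcS : c ∈ cclo S := hS (mem_iUnion.2 ⟨t₀, hc⟩)
  refine ⟨c, hcS, fun l hl => ?_⟩
  by_contra hnot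
  obtain ⟨z, u, hCu, hu⟩ := WeakBilin.exists_lt_of_notMem (topDualPairing ℝ E)
    (convex_convexHull ℝ S).closure isClosed_closure hnot
  have hpz : 0 < p z := by
    have hcz : c z < u := hCu c hcS
    change u < c z + l * p z at hu
    exact pos_of_mul_pos_right (by linarith) hl
  have hray : ∀ t, ∃ μ : ℝ, 0 < μ ∧ x + μ • z ∈ edom (f t) := fun t => by
    rw [← edom_coe_mul (he t)]
    exact (hg t).exists_add_smul_mem_edom (hxg t) (hδ t)
      fun q hq => (hCu q (hS (mem_iUnion.2 ⟨t, hq⟩))).le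
  obtain ⟨μ, hμ, hmem⟩ :=
    exists_pos_forall_add_smul_mem_edom (fun t => (hf t).2.2.1) husc hxt hray
  have hpμ := hp _ ((husc _).iSup_ne_top hmem)
  rw [map_add, map_smul, smul_eq_mul] at hpμ
  nlinarith

end Subdifferential

theorem statement11_general {T : Type*} [TopologicalSpace T] [CompactSpace T] [Nonempty T]
    (f : T → X → EReal) (hf : ∀ t, Gamma0 (f t))
    (husc : ∀ z : X, UpperSemicontinuous fun t => f t z)
    (x : X) (hx : x ∈ edom (fun z => ⨆ t, f t z))
    (et : T → ℝ) (het : ∀ t, 0 < et t ∧ et t ≤ 1)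
    (hinf : (⊥ : EReal) < ⨅ t, sMul (et t) (f t) x)
    (dt : T → ℝ) (a b : ℝ) (ha : 0 < a) (hab : ∀ t, a ≤ dt t ∧ dt t ≤ b) :
    normalCone (edom (fun z => ⨆ t, f t z)) x =
      recCone (cclo (⋃ t, esubdiff (sMul (et t) (f t)) x (dt t))) := by
  have hsMul : ∀ t, sMul (et t) (f t) = fun z => (et t : EReal) * f t z :=
    fun t => sMul_of_pos (het t).1 (f t)
  simp only [hsMul] at hinf ⊢
  apply Subset.antisymm
  · exact normalCone_subset_recCone hf husc hx (fun t => (het t).1) fun t => ha.trans_le (hab t).1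
  · exact recCone_subset_normalCone_s11 hx (fun t => ⟨(het t).1.le, (het t).2⟩) hinf fun t => (hab t).2

/-- Corollary `lemconsum`: under (SH), weights `(ε_t) ⊂ (0,1]` with
`inf_t ε_t f_t(x) > −∞`, and accuracies `δ_t` with `0 < inf δ_t ≤ sup δ_t < +∞`, one has
`N_{dom f}(x) = [co‾(⋃_t ∂_{δ_t}(ε_t f_t)(x))]_∞`. -/
theorem statement11 {T : Type*} [TopologicalSpace T] [CompactSpace T] [T2Space T] [Nonempty T]
    (f : T → X → EReal) (hf : ∀ t, Gamma0 (f t))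
    (husc : ∀ z : X, UpperSemicontinuous fun t => f t z)
    (x : X) (hx : x ∈ edom (fun z => ⨆ t, f t z))
    (et : T → ℝ) (het : ∀ t, 0 < et t ∧ et t ≤ 1)
    (hinf : (⊥ : EReal) < ⨅ t, sMul (et t) (f t) x)
    (dt : T → ℝ) (a b : ℝ) (ha : 0 < a) (hab : ∀ t, a ≤ dt t ∧ dt t ≤ b) :
    normalCone (edom (fun z => ⨆ t, f t z)) x =
      recCone (cclo (⋃ t, esubdiff (sMul (et t) (f t)) x (dt t))) :=
  statement11_general f hf husc x hx et het hinf dt a b ha hab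

end
end
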